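/- arXiv:1510.07408 — 4 statements merged into one kernel-verified Lean document; each statement's English description precedes it below -/
import Mathlib

section
/- Given any trap-colouring of the dotted triple-graph DT(G), for each colour c among white, black and green, the subgraph of DT(G) induced on the vertices of colour c is isomorphic to the dotted base graph D(G). Hence performing break operations on all red vertices yields three vertex-disjoint copies of D(G), one of each colour. -/
open SimpleGraph

inductive Colour : Type
  | white | black | green | red
  deriving DecidableEq

variable {V : Type*}

/-- The triple graph `T(G)`: vertex set `V × Fin 3`, with all nine edges between
`P_u = {u} × Fin 3` and `P_v = {v} × Fin 3` for each edge `{u,v}` of `G`. -/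
def tripleGraph (G : SimpleGraph V) : SimpleGraph (V × Fin 3) where
  Adj p q := G.Adj p.1 q.1
  symm := ⟨fun _ _ h => G.adj_symm h⟩
  loopless := ⟨fun p h => G.irrefl (v := p.1) h⟩

instance (G : SimpleGraph V) [DecidableRel G.Adj] : DecidableRel (tripleGraph G).Adj :=
  fun p q => inferInstanceAs (Decidable (G.Adj p.1 q.1))

/-- The dotting operator `D`: subdivide every edge of `H`. Vertices are
`W ⊕ H.edgeSet`: primary vertices are `Sum.inl`, added vertices are `Sum.inr`. -/
def dotted {W : Type*} (H : SimpleGraph W) : SimpleGraph (W ⊕ H.edgeSet) where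
  Adj x y :=
    (∃ (w : W) (e : H.edgeSet), x = Sum.inl w ∧ y = Sum.inr e ∧ w ∈ (e : Sym2 W)) ∨
    (∃ (w : W) (e : H.edgeSet), x = Sum.inr e ∧ y = Sum.inl w ∧ w ∈ (e : Sym2 W))
  symm := by
    constructor
    rintro x y (⟨w, e, rfl, rfl, h⟩ | ⟨w, e, rfl, rfl, h⟩)
    · exact Or.inr ⟨w, e, rfl, rfl, h⟩
    · exact Or.inl ⟨w, e, rfl, rfl, h⟩
  loopless := by
    constructor
    rintro x (⟨w, e, h₁, h₂, -⟩ | ⟨w, e, h₁, h₂, -⟩) <;> subst h₁ <;> simp at h₂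

/-- The dotted triple-graph `DT(G) = D(T(G))`. -/
abbrev dottedTripleGraph (G : SimpleGraph V) :
    SimpleGraph ((V × Fin 3) ⊕ (tripleGraph G).edgeSet) :=
  dotted (tripleGraph G)

/-- A trap-colouring of `DT(G)`. -/
structure TrapColouring (G : SimpleGraph V) where
  colour : (V × Fin 3) ⊕ (tripleGraph G).edgeSet → Colour
  primary_not_red : ∀ p : V × Fin 3, colour (Sum.inl p) ≠ Colour.red
  primary_inj : ∀ v : V, Function.Injective fun i : Fin 3 => colour (Sum.inl (v, i))
  added_rule : ∀ (p q : V × Fin 3) (h : (tripleGraph G).Adj p q),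
    colour (Sum.inr ⟨s(p, q), (SimpleGraph.mem_edgeSet _).mpr h⟩) =
      if colour (Sum.inl p) = colour (Sum.inl q) then colour (Sum.inl p) else Colour.red



namespace TrapAux

instance : Fintype Colour :=
  ⟨{Colour.white, Colour.black, Colour.green, Colour.red}, by rintro (_|_|_|_) <;> decide⟩

lemma exists_unique_idx (f : Fin 3 → Colour) (hinj : Function.Injective f)
    (hnr : ∀ i, f i ≠ Colour.red) (c : Colour) (hc : c ≠ Colour.red) : ∃! i, f i = c := by
  let g : Fin 3 → {x : Colour // x ≠ Colour.red} := fun i => ⟨f i, hnr i⟩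
  have hg : Function.Injective g := fun a b h => hinj (congrArg Subtype.val h)
  have hcard : Fintype.card {x : Colour // x ≠ Colour.red} = 3 := by decide
  have hbij : Function.Bijective g :=
    (Fintype.bijective_iff_injective_and_card g).2 ⟨hg, by rw [hcard]; rfl⟩
  obtain ⟨i, hi⟩ := hbij.2 ⟨c, hc⟩
  exact ⟨i, congrArg Subtype.val hi,
    fun j hj => hinj (hj.trans (congrArg Subtype.val hi).symm)⟩

variable {G : SimpleGraph V} (tc : TrapColouring G) (c : Colour)

variable (hc : c ≠ Colour.red)

noncomputable def idx (v : V) : Fin 3 :=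
  (exists_unique_idx _ (tc.primary_inj v) (fun i => tc.primary_not_red _) c hc).exists.choose

lemma idx_spec (v : V) : tc.colour (Sum.inl (v, idx tc c hc v)) = c :=
  (exists_unique_idx _ (tc.primary_inj v) (fun i => tc.primary_not_red _) c hc).exists.choose_spec

lemma idx_unique {v : V} {i : Fin 3} (h : tc.colour (Sum.inl (v, i)) = c) :
    i = idx tc c hc v :=
  tc.primary_inj v (h.trans (idx_spec tc c hc v).symm)

lemma endpoint_colour (hc : c ≠ Colour.red) {a b : V × Fin 3} (hs : s(a, b) ∈ (tripleGraph G).edgeSet)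
    (h : tc.colour (Sum.inr ⟨s(a, b), hs⟩) = c) :
    tc.colour (Sum.inl a) = c ∧ tc.colour (Sum.inl b) = c := by
  have key : tc.colour (Sum.inr ⟨s(a, b), hs⟩) =
      if tc.colour (Sum.inl a) = tc.colour (Sum.inl b) then tc.colour (Sum.inl a)
      else Colour.red := tc.added_rule a b ((SimpleGraph.mem_edgeSet _).mp hs)
  rw [h] at key
  split_ifs at key with h'
  · exact ⟨key.symm, (key.trans h').symm⟩
  · exact absurd key hc

end TrapAux

namespace TrapAux

variable {G : SimpleGraph V} (tc : TrapColouring G) (c : Colour) (hc : c ≠ Colour.red)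

lemma eq_of_fst_eq {p a : V × Fin 3} (hp : tc.colour (Sum.inl p) = c)
    (ha : tc.colour (Sum.inl a) = c) (h : p.1 = a.1) : p = a := by
  obtain ⟨p1, p2⟩ := p; obtain ⟨a1, a2⟩ := a
  dsimp at h; subst h
  have : p2 = a2 := tc.primary_inj p1 (hp.trans ha.symm)
  rw [this]

lemma map_fst_mem (s : Sym2 (V × Fin 3)) (hs : s ∈ (tripleGraph G).edgeSet) :
    Sym2.map Prod.fst s ∈ G.edgeSet := by
  revert hs
  induction s using Sym2.ind with
  | _ p q => intro hs; simpa using ((SimpleGraph.mem_edgeSet _).mp hs : G.Adj p.1 q.1)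

lemma mem_triple_edge (s : Sym2 V) (hs : s ∈ G.edgeSet) :
    Sym2.map (fun v => (v, idx tc c hc v)) s ∈ (tripleGraph G).edgeSet := by
  induction s using Sym2.ind with
  | _ u v => simpa [tripleGraph] using (SimpleGraph.mem_edgeSet _).mp hs

lemma colour_map (s : Sym2 V) (hs : s ∈ G.edgeSet) :
    tc.colour (Sum.inr ⟨Sym2.map (fun v => (v, idx tc c hc v)) s,
      mem_triple_edge tc c hc s hs⟩) = c := by
  induction s using Sym2.ind with
  | _ u v =>
    have hadj : (tripleGraph G).Adj (u, idx tc c hc u) (v, idx tc c hc v) :=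
      (SimpleGraph.mem_edgeSet _).mp hs
    have key := tc.added_rule (u, idx tc c hc u) (v, idx tc c hc v) hadj
    rw [idx_spec tc c hc, idx_spec tc c hc, if_pos rfl] at key
    exact key

lemma fst_mem_iff (hc : c ≠ Colour.red) {p : V × Fin 3} (hp : tc.colour (Sum.inl p) = c)
    {s : Sym2 (V × Fin 3)} (hs : s ∈ (tripleGraph G).edgeSet)
    (hcs : tc.colour (Sum.inr ⟨s, hs⟩) = c) :
    p.1 ∈ Sym2.map Prod.fst s ↔ p ∈ s := by
  revert hs hcs
  induction s using Sym2.ind with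
  | _ a b =>
    intro hs hcs
    obtain ⟨ha, hb⟩ := endpoint_colour tc c hc hs hcs
    simp only [Sym2.map_pair_eq, Sym2.mem_iff]
    constructor
    · rintro (h1 | h1)
      · exact Or.inl (eq_of_fst_eq tc c hp ha h1)
      · exact Or.inr (eq_of_fst_eq tc c hp hb h1)
    · rintro (rfl | rfl)
      · exact Or.inl rfl
      · exact Or.inr rfl

noncomputable def myEquiv :
    {x : (V × Fin 3) ⊕ (tripleGraph G).edgeSet | tc.colour x = c} ≃ (V ⊕ G.edgeSet) where
  toFun x := match x with
    | ⟨Sum.inl p, _⟩ => Sum.inl p.1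
    | ⟨Sum.inr e, _⟩ => Sum.inr ⟨Sym2.map Prod.fst e.1, by
        obtain ⟨e, he⟩ := e
        induction e using Sym2.ind with
        | _ p q => simpa using ((SimpleGraph.mem_edgeSet _).mp he : G.Adj p.1 q.1)⟩
  invFun y := match y with
    | Sum.inl v => ⟨Sum.inl (v, idx tc c hc v), idx_spec tc c hc v⟩
    | Sum.inr e => ⟨Sum.inr ⟨Sym2.map (fun v => (v, idx tc c hc v)) e.1,
        mem_triple_edge tc c hc e.1 e.2⟩, colour_map tc c hc e.1 e.2⟩
  left_inv := by
    rintro ⟨x, hx⟩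
    cases x with
    | inl p =>
      apply Subtype.ext
      show Sum.inl (p.1, idx tc c hc p.1) = Sum.inl p
      exact congrArg Sum.inl (eq_of_fst_eq tc c (idx_spec tc c hc p.1) hx rfl)
    | inr e =>
      obtain ⟨s, hs⟩ := e
      apply Subtype.ext
      show Sum.inr (⟨Sym2.map _ (Sym2.map Prod.fst s), _⟩ : (tripleGraph G).edgeSet)
        = Sum.inr ⟨s, hs⟩
      congr 1
      apply Subtype.ext
      show Sym2.map (fun v => (v, idx tc c hc v)) (Sym2.map Prod.fst s) = s
      revert hs hx
      induction s using Sym2.ind with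
      | _ a b =>
        intro hs hx
        obtain ⟨ha, hb⟩ := endpoint_colour tc c hc hs hx
        have ha2 : a = (a.1, idx tc c hc a.1) :=
          eq_of_fst_eq tc c ha (idx_spec tc c hc a.1) rfl
        have hb2 : b = (b.1, idx tc c hc b.1) :=
          eq_of_fst_eq tc c hb (idx_spec tc c hc b.1) rfl
        simp only [Sym2.map_pair_eq]
        rw [← ha2, ← hb2]
  right_inv := by
    rintro (v | ⟨s, hs⟩)
    · rfl
    · show Sum.inr (⟨Sym2.map Prod.fst (Sym2.map _ s), _⟩ : G.edgeSet) = Sum.inr ⟨s, hs⟩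
      congr 1
      apply Subtype.ext
      show Sym2.map Prod.fst (Sym2.map (fun v => (v, idx tc c hc v)) s) = s
      have h : Prod.fst ∘ (fun v : V => (v, idx tc c hc v)) = id := rfl
      rw [Sym2.map_map, h, Sym2.map_id]
      rfl

noncomputable def myIso :
    ((dotted (tripleGraph G)).induce {x | tc.colour x = c}) ≃g dotted G where
  toEquiv := myEquiv tc c hc
  map_rel_iff' := by
    rintro ⟨x, hx⟩ ⟨y, hy⟩
    cases x with
    | inl p =>
      cases y with
      | inl q =>
        simp [myEquiv, dotted, SimpleGraph.comap]
      | inr e =>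
        obtain ⟨s, hs⟩ := e
        simp [myEquiv, dotted, SimpleGraph.comap]
        constructor
        · rintro ⟨-, x, hm⟩
          exact ⟨p.1, p.2, rfl, hs, (fst_mem_iff tc c hc hx hs hy).1 (Sym2.mem_map.2 ⟨_, hm, rfl⟩)⟩
        · rintro ⟨a, b, rfl, -, hm⟩
          exact ⟨map_fst_mem s hs, b, hm⟩
    | inr e =>
      cases y with
      | inl q =>
        obtain ⟨s, hs⟩ := e
        simp [myEquiv, dotted, SimpleGraph.comap]
        constructor
        · rintro ⟨-, x, hm⟩
          exact ⟨hs, q.1, q.2, rfl, (fst_mem_iff tc c hc hy hs hx).1 (Sym2.mem_map.2 ⟨_, hm, rfl⟩)⟩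
        · rintro ⟨-, b, e, rfl, hm⟩
          exact ⟨map_fst_mem s hs, e, hm⟩
      | inr f =>
        simp [myEquiv, dotted, SimpleGraph.comap]

end TrapAux


/-- in any trap-colouring of `DT(G)`, for each non-red colour `c` the
subgraph of `DT(G)` induced on the vertices of colour `c` is isomorphic to the dotted
base graph `D(G)`; hence breaking all red vertices yields three vertex-disjoint copies
of `D(G)`, one of each colour. -/
theorem trapColouring_colour_class_iso (G : SimpleGraph V)
    (tc : TrapColouring G) (c : Colour) (hc : c ≠ Colour.red) :
    Nonempty (((dottedTripleGraph G).induce {x | tc.colour x = c}) ≃g dotted G) :=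
  ⟨TrapAux.myIso tc c hc⟩
end

section
/- If 𝓔 is a set of base-locations of the dotted triple-graph DT(G) containing two distinct base-locations i, j with ε_i ∩ ε_j ≠ ∅, then 𝓔 is not independently colourable: there exists a choice of local-colourings of the sets F_l for l ∈ 𝓔 that is not simultaneously realised by any trap-colouring of DT(G). -/
open SimpleGraph

variable {V : Type*}

/-- A base-location: either a vertex of `G` (primary) or an edge of `G` (added). -/
abbrev BaseLoc (G : SimpleGraph V) := V ⊕ G.edgeSet

/-- `ε_l`: the singleton `{v}` for a primary base-location `v`, and the set of the two
endpoints for an added base-location `e`. -/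
def epsSet (G : SimpleGraph V) : BaseLoc G → Set V
  | Sum.inl v => {v}
  | Sum.inr e => {w | w ∈ (e : Sym2 V)}

/-- `F_l`: the set of vertices of `DT(G)` at base-location `l`, i.e. the primary set
`P_v` or the added set `A_e`. -/
def locSet (G : SimpleGraph V) : BaseLoc G → Set ((V × Fin 3) ⊕ (tripleGraph G).edgeSet)
  | Sum.inl v => {x | ∃ i : Fin 3, x = Sum.inl (v, i)}
  | Sum.inr e => {x | ∃ a : (tripleGraph G).edgeSet,
      Sym2.map Prod.fst (a : Sym2 (V × Fin 3)) = (e : Sym2 V) ∧ x = Sum.inr a}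

instance : Fintype Colour where
  elems := {Colour.white, Colour.black, Colour.green, Colour.red}
  complete x := by cases x <;> simp

/-- Colour the added vertices according to the rule. -/
def ruleFun (c : V × Fin 3 → Colour) : Sym2 (V × Fin 3) → Colour :=
  Sym2.lift ⟨fun p q => if c p = c q then c p else Colour.red, by
    intro p q
    show (if c p = c q then c p else Colour.red) = if c q = c p then c q else Colour.red
    by_cases h : c p = c q
    · rw [if_pos h, if_pos h.symm, h]
    · rw [if_neg h, if_neg (fun h' => h h'.symm)]⟩

/-- Build a trap-colouring from a valid primary colouring. -/
def mkTC (G : SimpleGraph V) (c : V × Fin 3 → Colour)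
    (h1 : ∀ p, c p ≠ Colour.red)
    (h2 : ∀ v : V, Function.Injective fun k : Fin 3 => c (v, k)) :
    TrapColouring G where
  colour := Sum.elim c (fun e => ruleFun c (e : Sym2 (V × Fin 3)))
  primary_not_red := h1
  primary_inj := h2
  added_rule p q h := by simp [ruleFun]; exact if_congr Iff.rfl rfl rfl

lemma colour_cases : ∀ a b c d : Colour, a ≠ b → a ≠ c → b ≠ c →
    a ≠ Colour.red → b ≠ Colour.red → c ≠ Colour.red → d ≠ Colour.red →
    d = a ∨ d = b ∨ d = c := by decide

/-- any non-red colour is attained on each primary set -/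
lemma exists_colour {G : SimpleGraph V} (tc : TrapColouring G) (w : V) (c : Colour)
    (hc : c ≠ Colour.red) : ∃ k : Fin 3, tc.colour (Sum.inl (w, k)) = c := by
  have hinj := tc.primary_inj w
  have h01 : tc.colour (Sum.inl (w, 0)) ≠ tc.colour (Sum.inl (w, 1)) :=
    fun h => by have := hinj h; simp at this
  have h02 : tc.colour (Sum.inl (w, 0)) ≠ tc.colour (Sum.inl (w, 2)) :=
    fun h => by have := hinj h; simp at this
  have h12 : tc.colour (Sum.inl (w, 1)) ≠ tc.colour (Sum.inl (w, 2)) :=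
    fun h => by have := hinj h; simp at this
  rcases colour_cases _ _ _ c h01 h02 h12 (tc.primary_not_red _) (tc.primary_not_red _)
      (tc.primary_not_red _) hc with h | h | h
  · exact ⟨0, h.symm⟩
  · exact ⟨1, h.symm⟩
  · exact ⟨2, h.symm⟩

/-- If two trap-colourings agree on `F_l` and `v ∈ ε_l`, they agree on `P_v`. -/
lemma agree_primary {G : SimpleGraph V} (tc tc' : TrapColouring G) (l : BaseLoc G)
    (v : V) (hv : v ∈ epsSet G l)
    (hagree : ∀ x ∈ locSet G l, tc.colour x = tc'.colour x) :
    ∀ k : Fin 3, tc.colour (Sum.inl (v, k)) = tc'.colour (Sum.inl (v, k)) := by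
  intro k
  cases l with
  | inl u =>
    have hvu : v = u := hv
    subst hvu
    exact hagree _ ⟨k, rfl⟩
  | inr e =>
    have hv' : v ∈ (e : Sym2 V) := hv
    set w := Sym2.Mem.other hv' with hw
    have hsp : s(v, w) = (e : Sym2 V) := Sym2.other_spec hv'
    have hadj : G.Adj v w := by
      rw [← SimpleGraph.mem_edgeSet, hsp]; exact e.prop
    set c := tc'.colour (Sum.inl (v, k)) with hc
    have hcred : c ≠ Colour.red := tc'.primary_not_red _
    obtain ⟨k', hk'⟩ := exists_colour tc' w c hcred
    have hadjT : (tripleGraph G).Adj (v, k) (w, k') := hadj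
    set a : (tripleGraph G).edgeSet :=
      ⟨s((v, k), (w, k')), (SimpleGraph.mem_edgeSet _).mpr hadjT⟩ with ha
    have hmem : Sum.inr a ∈ locSet G (Sum.inr e) := by
      refine ⟨a, ?_, rfl⟩
      simp only [ha, Sym2.map_pair_eq]
      exact hsp
    have hag := hagree _ hmem
    have h1 : tc'.colour (Sum.inr a) = c := by
      rw [ha, tc'.added_rule _ _ hadjT, hk', ← hc, if_pos rfl]
    have h2 : tc.colour (Sum.inr a) =
        if tc.colour (Sum.inl (v, k)) = tc.colour (Sum.inl (w, k')) then
          tc.colour (Sum.inl (v, k)) else Colour.red := tc.added_rule _ _ hadjT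
    rw [hag, h1] at h2
    by_cases h : tc.colour (Sum.inl (v, k)) = tc.colour (Sum.inl (w, k'))
    · rw [if_pos h] at h2; exact h2.symm
    · rw [if_neg h] at h2; exact absurd h2 hcred

/-- if a set `E` of base-locations contains two distinct locations `i, j`
with `ε_i ∩ ε_j ≠ ∅`, then `E` is not independently colourable: some choice of
local-colourings (restrictions of trap-colourings) of the sets `F_l`, `l ∈ E`, is not
simultaneously realised by any trap-colouring of `DT(G)`. -/
theorem not_icl_of_not_disjoint (G : SimpleGraph V) (E : Set (BaseLoc G))
    (i j : BaseLoc G) (hi : i ∈ E) (hj : j ∈ E) (hij : i ≠ j)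
    (hmeet : (epsSet G i ∩ epsSet G j).Nonempty) :
    ∃ loc : ∀ l ∈ E, TrapColouring G,
      ¬ ∃ tc : TrapColouring G, ∀ (l : BaseLoc G) (hl : l ∈ E),
        ∀ x ∈ locSet G l, tc.colour x = (loc l hl).colour x := by
  classical
  obtain ⟨v, hvi, hvj⟩ := hmeet
  -- standard colouring
  set col : Fin 3 → Colour := ![Colour.white, Colour.black, Colour.green] with hcol
  have hcolred : ∀ k, col k ≠ Colour.red := by decide
  have hcolinj : Function.Injective col := by decide
  set sw : Fin 3 → Fin 3 := ![1, 0, 2] with hsw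
  have hswinj : Function.Injective sw := by decide
  set tc0 : TrapColouring G := mkTC G (fun p => col p.2) (fun p => hcolred p.2)
    (fun u a b h => hcolinj h) with htc0
  set c1 : V × Fin 3 → Colour :=
    fun p => if p.1 = v then col (sw p.2) else col p.2 with hc1
  have hc1red : ∀ p, c1 p ≠ Colour.red := by
    intro p; by_cases h : p.1 = v <;> simp [hc1, h, hcolred]
  have hc1inj : ∀ u : V, Function.Injective fun k : Fin 3 => c1 (u, k) := by
    intro u a b h
    by_cases hu : u = v
    · simp only [hc1, hu, if_pos rfl] at h
      exact hswinj (hcolinj h)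
    · simp only [hc1, hu, if_neg hu] at h
      exact hcolinj h
  set tc1 : TrapColouring G := mkTC G c1 hc1red hc1inj with htc1
  refine ⟨fun l _ => if l = j then tc1 else tc0, ?_⟩
  rintro ⟨tc, htc⟩
  have hAi : ∀ x ∈ locSet G i, tc.colour x = tc0.colour x := by
    intro x hx
    simpa only [if_neg hij] using htc i hi x hx
  have hAj : ∀ x ∈ locSet G j, tc.colour x = tc1.colour x := by
    intro x hx
    simpa only [if_pos rfl, ↓reduceIte] using htc j hj x hx
  have h0 := agree_primary tc tc0 i v hvi hAi 0
  have h1 := agree_primary tc tc1 j v hvj hAj 0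
  have e0 : tc0.colour (Sum.inl (v, 0)) = Colour.white := by
    simp [htc0, mkTC, hcol]
  have e1 : tc1.colour (Sum.inl (v, 0)) = Colour.black := by
    simp [htc1, mkTC, hc1, hsw, hcol]
  rw [e0] at h0
  rw [e1] at h1
  rw [h0] at h1
  exact Colour.noConfusion h1
end

section
/- Let G be a finite simple graph with maximum degree at most c, and let S be any set of n base-locations of G (i.e., n elements, each either a vertex or an edge of G). Then there exists a subset S' ⊆ S with |S'| ≥ n/(2c+1) such that for all distinct i, j ∈ S' the sets ε_i and ε_j are disjoint; that is, the chosen vertices are distinct, no chosen vertex is an endpoint of a chosen edge, and the chosen edges are pairwise non-incident (a matching). -/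
open SimpleGraph

variable {V : Type*}

lemma epsSet_nonempty (G : SimpleGraph V) (l : BaseLoc G) : (epsSet G l).Nonempty := by
  cases l with
  | inl v => exact ⟨v, rfl⟩
  | inr e =>
    obtain ⟨a, b, hab⟩ : ∃ a b, (e : Sym2 V) = s(a, b) := Sym2.exists.mp ⟨e.val, rfl⟩
    exact ⟨a, by simp [epsSet, hab]⟩

lemma conf_card_le {V : Type*} [Fintype V] [DecidableEq V]
    (G : SimpleGraph V) [DecidableRel G.Adj] (c : ℕ) (hc : ∀ v : V, G.degree v ≤ c)
    (l : BaseLoc G) (T : Finset (BaseLoc G))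
    (hT : ∀ m ∈ T, (epsSet G m ∩ epsSet G l).Nonempty) :
    T.card ≤ 2 * c + 1 := by
  classical
  set ψ : BaseLoc G → V ⊕ Sym2 V := Sum.map id Subtype.val with hψ
  have hinj : Function.Injective ψ := by
    intro x y hxy
    cases x with
    | inl a => cases y with
      | inl b => simpa [ψ] using hxy
      | inr b => simp [ψ] at hxy
    | inr a => cases y with
      | inl b => simp [ψ] at hxy
      | inr b => simpa [ψ, Subtype.val_inj] using hxy
  have hcard : T.card = (T.image ψ).card := (Finset.card_image_of_injective T hinj).symm
  rw [hcard]
  cases l with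
  | inl v =>
    have hsub : T.image ψ ⊆ insert (Sum.inl v) ((G.incidenceFinset v).image Sum.inr) := by
      intro x hx
      obtain ⟨m, hm, rfl⟩ := Finset.mem_image.mp hx
      obtain ⟨w, hw1, hw2⟩ := hT m hm
      have hwv : w = v := hw2
      cases m with
      | inl u =>
        have : u = v := by rw [← hwv]; exact hw1.symm
        simp [ψ, this]
      | inr f =>
        have hwf : w ∈ (f : Sym2 V) := hw1
        have : (f : Sym2 V) ∈ G.incidenceFinset v := by
          rw [mem_incidenceFinset]
          exact ⟨f.prop, hwv ▸ hwf⟩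
        simp only [ψ, Sum.map_inr, Finset.mem_insert]
        right
        exact Finset.mem_image_of_mem _ this
    calc (T.image ψ).card ≤ _ := Finset.card_le_card hsub
      _ ≤ ((G.incidenceFinset v).image Sum.inr).card + 1 := Finset.card_insert_le _ _
      _ ≤ (G.incidenceFinset v).card + 1 := by
          have := Finset.card_image_le (f := (Sum.inr : Sym2 V → V ⊕ Sym2 V)) (s := G.incidenceFinset v); omega
      _ ≤ 1 + c := by rw [card_incidenceFinset_eq_degree]; have := hc v; omega
      _ ≤ 2 * c + 1 := by omega
  | inr e =>
    obtain ⟨a, b, hab⟩ : ∃ a b, (e : Sym2 V) = s(a, b) := Sym2.exists.mp ⟨e.val, rfl⟩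
    have hadj : G.Adj a b := by rw [← mem_edgeSet, ← hab]; exact e.prop
    have hsub : T.image ψ ⊆ ({Sum.inl a, Sum.inl b} : Finset (V ⊕ Sym2 V)) ∪
        ((G.incidenceFinset a ∪ G.incidenceFinset b).image Sum.inr) := by
      intro x hx
      obtain ⟨m, hm, rfl⟩ := Finset.mem_image.mp hx
      obtain ⟨w, hw1, hw2⟩ := hT m hm
      have hwab : w = a ∨ w = b := by
        have : w ∈ (e : Sym2 V) := hw2
        rw [hab, Sym2.mem_iff] at this
        exact this
      cases m with
      | inl u =>
        have hu : u = w := hw1.symm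
        rcases hwab with h | h <;> simp [ψ, hu, h]
      | inr f =>
        have hwf : w ∈ (f : Sym2 V) := hw1
        have : (f : Sym2 V) ∈ G.incidenceFinset a ∪ G.incidenceFinset b := by
          rcases hwab with h | h
          · exact Finset.mem_union_left _ (by rw [mem_incidenceFinset]; exact ⟨f.prop, h ▸ hwf⟩)
          · exact Finset.mem_union_right _ (by rw [mem_incidenceFinset]; exact ⟨f.prop, h ▸ hwf⟩)
        simp only [ψ, Sum.map_inr, Finset.mem_union]
        right
        exact Finset.mem_image_of_mem _ this
    have hkey : (G.incidenceFinset a ∪ G.incidenceFinset b).card ≤ 2 * c - 1 := by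
      have hinter : 1 ≤ (G.incidenceFinset a ∩ G.incidenceFinset b).card := by
        apply Finset.card_pos.mpr
        refine ⟨s(a, b), Finset.mem_inter.mpr ⟨?_, ?_⟩⟩
        · rw [mem_incidenceFinset]; exact ⟨(mem_edgeSet G).mpr hadj, by simp⟩
        · rw [mem_incidenceFinset]; exact ⟨(mem_edgeSet G).mpr hadj, by simp⟩
      have := Finset.card_union_add_card_inter (G.incidenceFinset a) (G.incidenceFinset b)
      have ha := hc a
      have hb := hc b
      rw [card_incidenceFinset_eq_degree, card_incidenceFinset_eq_degree] at this
      omega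
    have hc1 : 1 ≤ c := by
      have := hc a
      have : 0 < G.degree a := G.degree_pos_iff_exists_adj a |>.mpr ⟨b, hadj⟩
      omega
    calc (T.image ψ).card ≤ _ := Finset.card_le_card hsub
      _ ≤ ({Sum.inl a, Sum.inl b} : Finset (V ⊕ Sym2 V)).card +
          ((G.incidenceFinset a ∪ G.incidenceFinset b).image Sum.inr).card :=
            Finset.card_union_le _ _
      _ ≤ 2 + (2 * c - 1) := by
          gcongr
          · exact le_trans (Finset.card_insert_le _ _) (by simp)
          · exact le_trans Finset.card_image_le hkey
      _ ≤ 2 * c + 1 := by omega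

/-- if `G` has maximum degree at most `c` and `S` is any finite set of `n`
base-locations, there is a subset `S' ⊆ S` with `|S'| ≥ n / (2c+1)` (i.e.
`n ≤ (2c+1)·|S'|`) whose locations have pairwise disjoint `ε`-sets: distinct chosen
vertices, no chosen vertex an endpoint of a chosen edge, and chosen edges forming a
matching. -/
theorem exists_large_icl_subset {V : Type*} [Fintype V] [DecidableEq V]
    (G : SimpleGraph V) [DecidableRel G.Adj] (c : ℕ) (hc : ∀ v : V, G.degree v ≤ c)
    (S : Finset (BaseLoc G)) :
    ∃ S' ⊆ S, S.card ≤ (2 * c + 1) * S'.card ∧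
      ∀ i ∈ S', ∀ j ∈ S', i ≠ j → epsSet G i ∩ epsSet G j = ∅ := by
  classical
  induction S using Finset.strongInduction with
  | H S IH =>
    rcases S.eq_empty_or_nonempty with rfl | ⟨l, hl⟩
    · exact ⟨∅, Finset.Subset.refl _, by simp, by simp⟩
    · set T := S.filter (fun m => epsSet G m ∩ epsSet G l = ∅) with hTdef
      have hTsub : T ⊆ S := Finset.filter_subset _ _
      have hlT : l ∉ T := by
        simp only [hTdef, Finset.mem_filter, not_and]
        intro _
        rw [Set.inter_self]
        exact Set.nonempty_iff_ne_empty.mp (epsSet_nonempty G l)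
      have hTss : T ⊂ S := Finset.ssubset_iff_of_subset hTsub |>.mpr ⟨l, hl, hlT⟩
      obtain ⟨S'', hS''sub, hS''card, hS''disj⟩ := IH T hTss
      have hlS'' : l ∉ S'' := fun h => hlT (hS''sub h)
      refine ⟨insert l S'', ?_, ?_, ?_⟩
      · intro x hx
        rcases Finset.mem_insert.mp hx with rfl | hx
        · exact hl
        · exact hTsub (hS''sub hx)
      · have hsplit : S.card = T.card + (S.filter (fun m => ¬ (epsSet G m ∩ epsSet G l = ∅))).card := by
          rw [hTdef, Finset.card_filter_add_card_filter_not]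
        have hconf : (S.filter (fun m => ¬ (epsSet G m ∩ epsSet G l = ∅))).card ≤ 2 * c + 1 := by
          apply conf_card_le G c hc l
          intro m hm
          have := (Finset.mem_filter.mp hm).2
          exact Set.nonempty_iff_ne_empty.mpr this
        rw [Finset.card_insert_of_notMem hlS'']
        calc S.card = T.card + _ := hsplit
          _ ≤ (2 * c + 1) * S''.card + (2 * c + 1) := by omega
          _ = (2 * c + 1) * (S''.card + 1) := by ring
      · intro i hi j hj hij
        rcases Finset.mem_insert.mp hi with rfl | hi' <;>
          rcases Finset.mem_insert.mp hj with rfl | hj'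
        · exact absurd rfl hij
        · rw [Set.inter_comm]
          exact (Finset.mem_filter.mp (hS''sub hj')).2
        · exact (Finset.mem_filter.mp (hS''sub hi')).2
        · exact hS''disj i hi' j hj' hij
end

section
/- Given any trap-colouring of the dotted triple-graph DT(G), the subgraph of DT(G) induced on the union of (i) all green vertices, (ii) all white primary vertices, and (iii) all black added vertices, consists of a copy of the dotted base graph D(G) on the green vertices together with isolated vertices: every white primary vertex and every black added vertex in this induced subgraph has no neighbours, and the green vertices induce a graph isomorphic to D(G). -/
open SimpleGraph

variable {V : Type*}

-- AUX

lemma dotted_adj_inl_inr {W : Type*} {H : SimpleGraph W} {w : W} {e : H.edgeSet} :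
    (dotted H).Adj (Sum.inl w) (Sum.inr e) ↔ w ∈ (e : Sym2 W) := by
  constructor
  · rintro (⟨w', e', h1, h2, h3⟩ | ⟨w', e', h1, h2, h3⟩)
    · injection h1 with h; subst h
      injection h2 with h; subst h
      exact h3
    · exact absurd h1 (by simp)
  · exact fun h => Or.inl ⟨w, e, rfl, rfl, h⟩

lemma dotted_not_adj_inl_inl {W : Type*} {H : SimpleGraph W} {a b : W} :
    ¬ (dotted H).Adj (Sum.inl a) (Sum.inl b) := by
  rintro (⟨w, e, h1, h2, -⟩ | ⟨w, e, h1, h2, -⟩) <;> simp_all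

lemma dotted_not_adj_inr_inr {W : Type*} {H : SimpleGraph W} {a b : H.edgeSet} :
    ¬ (dotted H).Adj (Sum.inr a) (Sum.inr b) := by
  rintro (⟨w, e, h1, h2, -⟩ | ⟨w, e, h1, h2, -⟩) <;> simp_all

lemma dotted_adj_inr_inl {W : Type*} {H : SimpleGraph W} {w : W} {e : H.edgeSet} :
    (dotted H).Adj (Sum.inr e) (Sum.inl w) ↔ w ∈ (e : Sym2 W) := by
  rw [(dotted H).adj_comm]; exact dotted_adj_inl_inr

lemma added_endpoints (G : SimpleGraph V) (tc : TrapColouring G) {c : Colour}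
    (hc : c ≠ Colour.red) :
    ∀ (s : Sym2 (V × Fin 3)) (hs : s ∈ (tripleGraph G).edgeSet),
      tc.colour (Sum.inr ⟨s, hs⟩) = c → ∀ p ∈ s, tc.colour (Sum.inl p) = c := by
  intro s
  induction s using Sym2.ind with
  | _ p q =>
    intro hs h x hx
    have hadj : (tripleGraph G).Adj p q := hs
    have hr := tc.added_rule p q hadj
    rw [show (⟨s(p,q), hs⟩ : (tripleGraph G).edgeSet)
        = ⟨s(p,q), (SimpleGraph.mem_edgeSet _).mpr hadj⟩ from rfl, hr] at h
    split_ifs at h with heq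
    · rw [Sym2.mem_iff] at hx
      rcases hx with rfl | rfl
      · exact h
      · exact heq ▸ h
    · exact absurd h.symm hc

lemma added_green_of (G : SimpleGraph V) (tc : TrapColouring G) :
    ∀ (s : Sym2 (V × Fin 3)) (hs : s ∈ (tripleGraph G).edgeSet),
      (∀ p ∈ s, tc.colour (Sum.inl p) = Colour.green) →
      tc.colour (Sum.inr ⟨s, hs⟩) = Colour.green := by
  intro s
  induction s using Sym2.ind with
  | _ p q =>
    intro hs h
    have hadj : (tripleGraph G).Adj p q := hs
    have hr := tc.added_rule p q hadj
    rw [show (⟨s(p,q), hs⟩ : (tripleGraph G).edgeSet)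
        = ⟨s(p,q), (SimpleGraph.mem_edgeSet _).mpr hadj⟩ from rfl, hr]
    rw [h p (by simp), h q (by simp)]
    simp

lemma exists_green (G : SimpleGraph V) (tc : TrapColouring G) (v : V) :
    ∃! i : Fin 3, tc.colour (Sum.inl (v, i)) = Colour.green := by
  have hinj := tc.primary_inj v
  have hex : ∃ i : Fin 3, tc.colour (Sum.inl (v, i)) = Colour.green := by
    by_contra hcon
    push_neg at hcon
    have mem : ∀ i : Fin 3, tc.colour (Sum.inl (v, i)) = Colour.white ∨
        tc.colour (Sum.inl (v, i)) = Colour.black := by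
      intro i
      have h1 := tc.primary_not_red (v, i)
      have h2 := hcon i
      cases h : tc.colour (Sum.inl (v, i)) <;> simp_all
    rcases mem 0 with a0 | a0 <;> rcases mem 1 with a1 | a1 <;> rcases mem 2 with a2 | a2
    all_goals first
      | exact absurd (hinj (a0.trans a1.symm)) (by decide)
      | exact absurd (hinj (a0.trans a2.symm)) (by decide)
      | exact absurd (hinj (a1.trans a2.symm)) (by decide)
  obtain ⟨i, hi⟩ := hex
  exact ⟨i, hi, fun j hj => hinj (hj.trans hi.symm)⟩

lemma fst_mem (G : SimpleGraph V) :
    ∀ s ∈ (tripleGraph G).edgeSet, Sym2.map Prod.fst s ∈ G.edgeSet := by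
  intro s
  induction s using Sym2.ind with
  | _ p q => intro hs; rw [Sym2.map_pair_eq]; exact hs

lemma lift_mem (G : SimpleGraph V) (g : V → Fin 3) :
    ∀ s ∈ G.edgeSet, Sym2.map (fun v => (v, g v)) s ∈ (tripleGraph G).edgeSet := by
  intro s
  induction s using Sym2.ind with
  | _ u v => intro hs; rw [Sym2.map_pair_eq]; exact hs

lemma iso_part (G : SimpleGraph V) (tc : TrapColouring G)
    (g : V → Fin 3) (hg : ∀ v, tc.colour (Sum.inl (v, g v)) = Colour.green)
    (hu : ∀ (v : V) (j : Fin 3), tc.colour (Sum.inl (v, j)) = Colour.green → j = g v) :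
    Nonempty (((dottedTripleGraph G).induce {z | tc.colour z = Colour.green}) ≃g dotted G) := by
  set f : V → V × Fin 3 := fun v => (v, g v) with hf
  have green_lift : ∀ (s : Sym2 V) (hs : s ∈ G.edgeSet),
      tc.colour (Sum.inr ⟨Sym2.map f s, lift_mem G g s hs⟩) = Colour.green := by
    intro s hs
    apply added_green_of
    intro p hp
    rw [Sym2.mem_map] at hp
    obtain ⟨a, -, rfl⟩ := hp
    exact hg a
  have ends_green : ∀ (e : (tripleGraph G).edgeSet),
      tc.colour (Sum.inr e) = Colour.green → ∀ p ∈ (e : Sym2 (V × Fin 3)),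
        tc.colour (Sum.inl p) = Colour.green := by
    rintro ⟨s, hs⟩ h p hp
    exact added_endpoints G tc (by decide) s hs h p hp
  have key : ∀ (e : (tripleGraph G).edgeSet), tc.colour (Sum.inr e) = Colour.green →
      Sym2.map f (Sym2.map Prod.fst (e : Sym2 (V × Fin 3))) = (e : Sym2 (V × Fin 3)) := by
    rintro ⟨s, hs⟩ h
    rw [Sym2.map_map]
    have : ∀ p ∈ s, (f ∘ Prod.fst) p = p := by
      intro p hp
      have hgp := ends_green ⟨s, hs⟩ h p hp
      have := (hu p.1 p.2 hgp).symm
      simp only [Function.comp, hf]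
      exact Prod.ext rfl this
    calc Sym2.map (f ∘ Prod.fst) s = Sym2.map id s := Sym2.map_congr this
      _ = s := congrFun Sym2.map_id s
  refine ⟨{
    toFun := fun a => match a with
      | ⟨Sum.inl p, _⟩ => Sum.inl p.1
      | ⟨Sum.inr e, _⟩ => Sum.inr ⟨Sym2.map Prod.fst e.1, fst_mem G e.1 e.2⟩
    invFun := fun x => match x with
      | Sum.inl v => ⟨Sum.inl (v, g v), hg v⟩
      | Sum.inr e => ⟨Sum.inr ⟨Sym2.map f e.1, lift_mem G g e.1 e.2⟩, green_lift e.1 e.2⟩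
    left_inv := by
      rintro ⟨x, hx⟩
      rcases x with p | e
      · apply Subtype.ext
        simp only []
        have : (p.1, g p.1) = p := Prod.ext rfl (hu p.1 p.2 hx).symm
        exact congrArg Sum.inl this
      · apply Subtype.ext
        exact congrArg Sum.inr (Subtype.ext (key e hx))
    right_inv := by
      rintro (v | e)
      · rfl
      · apply congrArg Sum.inr
        apply Subtype.ext
        show Sym2.map Prod.fst (Sym2.map f e.1) = e.1
        rw [Sym2.map_map]
        have : ∀ u ∈ (e : Sym2 V), (Prod.fst ∘ f) u = u := fun u _ => rfl
        calc Sym2.map (Prod.fst ∘ f) e.1 = Sym2.map id e.1 := Sym2.map_congr this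
          _ = e.1 := congrFun Sym2.map_id e.1
    map_rel_iff' := by
      rintro ⟨x, hx⟩ ⟨y, hy⟩
      rcases x with p | e <;> rcases y with q | e'
      · show (dotted G).Adj (Sum.inl p.1) (Sum.inl q.1) ↔
          (dotted (tripleGraph G)).Adj (Sum.inl p) (Sum.inl q)
        exact ⟨fun h => absurd h dotted_not_adj_inl_inl,
          fun h => absurd h dotted_not_adj_inl_inl⟩
      · show (dotted G).Adj (Sum.inl p.1)
            (Sum.inr ⟨Sym2.map Prod.fst e'.1, fst_mem G e'.1 e'.2⟩) ↔
          (dotted (tripleGraph G)).Adj (Sum.inl p) (Sum.inr e')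
        rw [dotted_adj_inl_inr, dotted_adj_inl_inr]
        show p.1 ∈ Sym2.map Prod.fst e'.1 ↔ p ∈ e'.1
        rw [Sym2.mem_map]
        constructor
        · rintro ⟨a, ha, hfa⟩
          have hga := ends_green e' hy a ha
          have ha2 : a.2 = g a.1 := hu a.1 a.2 hga
          have hp2 : p.2 = g p.1 := hu p.1 p.2 hx
          have hap : a = p := Prod.ext hfa (by rw [ha2, hp2, hfa])
          exact hap ▸ ha
        · intro h
          exact ⟨p, h, rfl⟩
      · show (dotted G).Adj
            (Sum.inr ⟨Sym2.map Prod.fst e.1, fst_mem G e.1 e.2⟩) (Sum.inl q.1) ↔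
          (dotted (tripleGraph G)).Adj (Sum.inr e) (Sum.inl q)
        rw [dotted_adj_inr_inl, dotted_adj_inr_inl]
        show q.1 ∈ Sym2.map Prod.fst e.1 ↔ q ∈ e.1
        rw [Sym2.mem_map]
        constructor
        · rintro ⟨a, ha, hfa⟩
          have hga := ends_green e hx a ha
          have ha2 : a.2 = g a.1 := hu a.1 a.2 hga
          have hq2 : q.2 = g q.1 := hu q.1 q.2 hy
          have hap : a = q := Prod.ext hfa (by rw [ha2, hq2, hfa])
          exact hap ▸ ha
        · intro h
          exact ⟨q, h, rfl⟩
      · show (dotted G).Adj (Sum.inr ⟨Sym2.map Prod.fst e.1, fst_mem G e.1 e.2⟩)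
            (Sum.inr ⟨Sym2.map Prod.fst e'.1, fst_mem G e'.1 e'.2⟩) ↔
          (dotted (tripleGraph G)).Adj (Sum.inr e) (Sum.inr e')
        exact ⟨fun h => absurd h dotted_not_adj_inr_inr,
          fun h => absurd h dotted_not_adj_inr_inr⟩
  }⟩


/-- in any trap-colouring of `DT(G)`, the subgraph of `DT(G)` induced on
the union of the green vertices, the white primary vertices and the black added vertices
consists of a copy of `D(G)` on the green vertices together with isolated vertices:
every edge of the induced subgraph joins two green vertices (so white primary and black
added vertices have no neighbours there), and the green vertices induce a graph
isomorphic to `D(G)`. -/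
theorem green_graph_with_isolated_traps (G : SimpleGraph V) (tc : TrapColouring G) :
    (∀ x y : (V × Fin 3) ⊕ (tripleGraph G).edgeSet,
      x ∈ ({z | tc.colour z = Colour.green} ∪
            {z | tc.colour z = Colour.white ∧ ∃ p : V × Fin 3, z = Sum.inl p} ∪
            {z | tc.colour z = Colour.black ∧ ∃ a : (tripleGraph G).edgeSet, z = Sum.inr a}) →
      y ∈ ({z | tc.colour z = Colour.green} ∪
            {z | tc.colour z = Colour.white ∧ ∃ p : V × Fin 3, z = Sum.inl p} ∪
            {z | tc.colour z = Colour.black ∧ ∃ a : (tripleGraph G).edgeSet, z = Sum.inr a}) →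
      (dottedTripleGraph G).Adj x y →
      tc.colour x = Colour.green ∧ tc.colour y = Colour.green) ∧
    Nonempty (((dottedTripleGraph G).induce {z | tc.colour z = Colour.green}) ≃g dotted G) := by
  constructor
  · rintro x y hx hy hadj
    simp only [Set.mem_union, Set.mem_setOf_eq] at hx hy
    rcases hadj with ⟨w, e, rfl, rfl, hmem⟩ | ⟨w, e, rfl, rfl, hmem⟩
    · have hxc : tc.colour (Sum.inl w) = Colour.green ∨
          tc.colour (Sum.inl w) = Colour.white := by
        rcases hx with (h | ⟨h, -⟩) | ⟨-, a, ha⟩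
        · exact Or.inl h
        · exact Or.inr h
        · exact absurd ha (by simp)
      have hyc : tc.colour (Sum.inr e) = Colour.green ∨
          tc.colour (Sum.inr e) = Colour.black := by
        rcases hy with (h | ⟨-, p, hp⟩) | ⟨h, -⟩
        · exact Or.inl h
        · exact absurd hp (by simp)
        · exact Or.inr h
      rcases hyc with hyg | hyb
      · have hwg : tc.colour (Sum.inl w) = Colour.green :=
          added_endpoints G tc (by decide) e.1 e.2 hyg w hmem
        exact ⟨hwg, hyg⟩
      · have hwb : tc.colour (Sum.inl w) = Colour.black :=
          added_endpoints G tc (by decide) e.1 e.2 hyb w hmem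
        rcases hxc with h | h <;> rw [hwb] at h <;> exact absurd h (by decide)
    · have hxc : tc.colour (Sum.inr e) = Colour.green ∨
          tc.colour (Sum.inr e) = Colour.black := by
        rcases hx with (h | ⟨-, p, hp⟩) | ⟨h, -⟩
        · exact Or.inl h
        · exact absurd hp (by simp)
        · exact Or.inr h
      have hyc : tc.colour (Sum.inl w) = Colour.green ∨
          tc.colour (Sum.inl w) = Colour.white := by
        rcases hy with (h | ⟨h, -⟩) | ⟨-, a, ha⟩
        · exact Or.inl h
        · exact Or.inr h
        · exact absurd ha (by simp)
      rcases hxc with hxg | hxb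
      · have hwg : tc.colour (Sum.inl w) = Colour.green :=
          added_endpoints G tc (by decide) e.1 e.2 hxg w hmem
        exact ⟨hxg, hwg⟩
      · have hwb : tc.colour (Sum.inl w) = Colour.black :=
          added_endpoints G tc (by decide) e.1 e.2 hxb w hmem
        rcases hyc with h | h <;> rw [hwb] at h <;> exact absurd h (by decide)
  · choose g hg hu using fun v => exists_green G tc v
    exact iso_part G tc g hg hu
end
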